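/- The relation 'B beats A' (meaning B occurs before A with probability > 1/2 in fair coin flips) on length-3 patterns is not transitive: HHT beats HTT, HTT beats TTH, TTH beats THH, and THH beats HHT. -/

import Mathlib

open MeasureTheory ProbabilityTheory
open scoped ENNReal

/-- The pattern `P` occurs at time `n` (i.e. within the first `n` draws
`x 0, …, x (n-1)`, as the final block of `P.length` consecutive draws). -/
def occursAt {α : Type*} (P : List α) (x : ℕ → α) (n : ℕ) : Prop :=
  P.length ≤ n ∧ ∀ i (h : i < P.length), x (n - P.length + i) = P.get ⟨i, h⟩

/-- The first time at which the pattern `P` occurs (`∞` if it never occurs). -/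
noncomputable def hitTime {α : Type*} (P : List α) (x : ℕ → α) : ℝ≥0∞ :=
  sInf ((fun n : ℕ => (n : ℝ≥0∞)) '' {n | occursAt P x n})

/-- The fair-coin distribution on `Bool` (`true` = heads `H`, `false` = tails `T`). -/
noncomputable def fairCoin : Measure Bool := (PMF.bernoulli (1/2) (by norm_num)).toMeasure

/-- `beats μ X B A` : pattern `B` occurs before pattern `A` with probability > 1/2. -/
def beats {Ω : Type*} [MeasurableSpace Ω] (μ : Measure Ω) (X : ℕ → Ω → Bool)
    (B A : List Bool) : Prop :=
  1/2 < μ {ω | hitTime B (fun n => X n ω) < hitTime A (fun n => X n ω)}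

/-!
Each winning probability is bounded below by the probability that the winning pattern appears
within the first 8 flips, strictly before the losing one. That event only depends on the first
8 flips, so its probability is the number of such words of length 8 divided by `2 ^ 8`, and a
finite count shows that it exceeds `1 / 2` for each pair of the cycle. No pattern beats itself,
so the cycle is incompatible with transitivity.
-/

instance occursAt.instDecidable {α : Type*} [DecidableEq α] (P : List α) (x : ℕ → α) (n : ℕ) :
    Decidable (occursAt P x n) :=
  inferInstanceAs (Decidable (_ ∧ _))

section HitTime

variable {α : Type*} {P A B : List α} {x y : ℕ → α} {n N : ℕ}

theorem occursAt_congr (h : ∀ i < n, x i = y i) : occursAt P x n ↔ occursAt P y n := by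
  refine and_congr_right fun _ => forall₂_congr fun i hi => ?_
  rw [h _ (by omega)]

theorem hitTime_le_of_occursAt (h : occursAt P x n) : hitTime P x ≤ n :=
  sInf_le ⟨n, h, rfl⟩

theorem le_hitTime_of_forall_not_occursAt (h : ∀ m < n, ¬ occursAt P x m) :
    (n : ℝ≥0∞) ≤ hitTime P x := by
  refine le_sInf ?_
  rintro _ ⟨m, hm, rfl⟩
  exact Nat.cast_le.mpr (not_lt.mp fun hmn => h m hmn hm)

theorem hitTime_lt_hitTime (hB : occursAt B x n) (hA : ∀ m ≤ n, ¬ occursAt A x m) :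
    hitTime B x < hitTime A x :=
  calc hitTime B x ≤ n := hitTime_le_of_occursAt hB
    _ < (n + 1 : ℕ) := Nat.cast_lt.mpr n.lt_succ_self
    _ ≤ hitTime A x := le_hitTime_of_forall_not_occursAt fun m hm => hA m (by omega)

def WinsWithin (N : ℕ) (B A : List α) (x : ℕ → α) : Prop :=
  ∃ n ≤ N, occursAt B x n ∧ ∀ m ≤ n, ¬ occursAt A x m

instance WinsWithin.instDecidable [DecidableEq α] (N : ℕ) (B A : List α) (x : ℕ → α) :
    Decidable (WinsWithin N B A x) :=
  inferInstanceAs (Decidable (∃ n ≤ N, _))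

theorem WinsWithin.congr (h : ∀ i < N, x i = y i) (hx : WinsWithin N B A x) :
    WinsWithin N B A y := by
  obtain ⟨n, hn, hB, hA⟩ := hx
  have hxy : ∀ {m}, m ≤ n → ∀ i < m, x i = y i := fun hm i hi => h i (by omega)
  exact ⟨n, hn, (occursAt_congr (hxy le_rfl)).mp hB,
    fun m hm hAy => hA m hm ((occursAt_congr (hxy hm)).mpr hAy)⟩

theorem WinsWithin.hitTime_lt (h : WinsWithin N B A x) : hitTime B x < hitTime A x := by
  obtain ⟨n, -, hB, hA⟩ := h
  exact hitTime_lt_hitTime hB hA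

end HitTime

def extendByFalse {N : ℕ} (w : Fin N → Bool) : ℕ → Bool :=
  fun i => if h : i < N then w ⟨i, h⟩ else false

section FairCoins

variable {Ω : Type*} [MeasurableSpace Ω] {μ : Measure Ω} {X : ℕ → Ω → Bool}

theorem fairCoin_singleton (b : Bool) : fairCoin {b} = 2⁻¹ := by
  rw [fairCoin, PMF.toMeasure_apply_singleton _ _ (measurableSet_singleton b),
    PMF.bernoulli_apply]
  cases b <;> simp [one_div, ENNReal.one_sub_inv_two]

theorem measure_prefix_eq (hmeas : ∀ n, Measurable (X n)) (hindep : iIndepFun X μ)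
    (hfair : ∀ n, μ.map (X n) = fairCoin) (N : ℕ) (w : Fin N → Bool) :
    μ ((fun ω (i : Fin N) => X i ω) ⁻¹' {w}) = 2⁻¹ ^ N := by
  have hcyl : (fun ω (i : Fin N) => X i ω) ⁻¹' {w} = ⋂ i : Fin N, X i ⁻¹' {w i} := by
    ext ω
    simp [funext_iff]
  rw [hcyl, (hindep.precomp Fin.val_injective).meas_iInter
    fun i => ⟨{w i}, measurableSet_singleton _, rfl⟩]
  simp [← Measure.map_apply (hmeas _) (measurableSet_singleton _), hfair, fairCoin_singleton]

open Finset in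
theorem beats_of_card_winsWithin (hmeas : ∀ n, Measurable (X n)) (hindep : iIndepFun X μ)
    (hfair : ∀ n, μ.map (X n) = fairCoin) (N : ℕ) (B A : List Bool)
    (hcard : 2 ^ N < 2 * #{w : Fin N → Bool | WinsWithin N B A (extendByFalse w)}) :
    beats μ X B A := by
  set S := ({w : Fin N → Bool | WinsWithin N B A (extendByFalse w)} : Finset _)
  set V : Ω → Fin N → Bool := fun ω i => X i ω
  have hsub : V ⁻¹' S ⊆ {ω | hitTime B (fun n => X n ω) < hitTime A (fun n => X n ω)} := by
    intro ω hω
    refine WinsWithin.hitTime_lt (WinsWithin.congr (fun i hi => ?_) (mem_filter.mp hω).2)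
    simp [extendByFalse, hi, V]
  have hprob : μ (V ⁻¹' S) = #S * 2⁻¹ ^ N := by
    rw [← sum_measure_preimage_singleton S fun w _ =>
      measurableSet_preimage (measurable_pi_lambda _ fun i => hmeas i) (measurableSet_singleton w)]
    simp [measure_prefix_eq hmeas hindep hfair]
  have hhalf : (2⁻¹ : ℝ≥0∞) < #S * 2⁻¹ ^ N := by
    rw [← ENNReal.inv_pow, ← div_eq_mul_inv, ENNReal.lt_div_iff_mul_lt (by simp) (by simp),
      mul_comm, ← div_eq_mul_inv, ENNReal.div_lt_iff (by simp) (by simp), mul_comm]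
    exact_mod_cast hcard
  calc (1 / 2 : ℝ≥0∞) = 2⁻¹ := one_div 2
    _ < μ (V ⁻¹' S) := hprob ▸ hhalf
    _ ≤ _ := measure_mono hsub

theorem not_beats_self (A : List Bool) : ¬ beats μ X A A := by
  simp [beats]

end FairCoins

set_option maxRecDepth 100000 in
theorem stmt_3_general {Ω : Type*} [MeasurableSpace Ω] (μ : Measure Ω)
    (X : ℕ → Ω → Bool) (hmeas : ∀ n, Measurable (X n))
    (hindep : iIndepFun X μ)
    (hfair : ∀ n, μ.map (X n) = fairCoin) :
    beats μ X ([true, true, false]) ([true, false, false]) ∧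
    beats μ X ([true, false, false]) ([false, false, true]) ∧
    beats μ X ([false, false, true]) ([false, true, true]) ∧
    beats μ X ([false, true, true]) ([true, true, false]) ∧
    ¬ Transitive (beats μ X) := by
  have hHHT : beats μ X [true, true, false] [true, false, false] :=
    beats_of_card_winsWithin hmeas hindep hfair 8 _ _ (by decide)
  have hHTT : beats μ X [true, false, false] [false, false, true] :=
    beats_of_card_winsWithin hmeas hindep hfair 8 _ _ (by decide)
  have hTTH : beats μ X [false, false, true] [false, true, true] :=
    beats_of_card_winsWithin hmeas hindep hfair 8 _ _ (by decide)
  have hTHH : beats μ X [false, true, true] [true, true, false] :=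
    beats_of_card_winsWithin hmeas hindep hfair 8 _ _ (by decide)
  exact ⟨hHHT, hHTT, hTTH, hTHH, fun htrans =>
    not_beats_self _ (htrans (htrans (htrans hHHT hHTT) hTTH) hTHH)⟩

/-- The `beats` relation on length-3 patterns is not transitive: there is the cycle
HHT beats HTT, HTT beats TTH, TTH beats THH, and THH beats HHT. -/
theorem stmt_3 {Ω : Type*} [MeasurableSpace Ω] (μ : Measure Ω) [IsProbabilityMeasure μ]
    (X : ℕ → Ω → Bool) (hmeas : ∀ n, Measurable (X n))
    (hindep : iIndepFun X μ)
    (hfair : ∀ n, μ.map (X n) = fairCoin) :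
    beats μ X ([true, true, false]) ([true, false, false]) ∧
    beats μ X ([true, false, false]) ([false, false, true]) ∧
    beats μ X ([false, false, true]) ([false, true, true]) ∧
    beats μ X ([false, true, true]) ([true, true, false]) ∧
    ¬ Transitive (beats μ X) :=
  stmt_3_general μ X hmeas hindep hfair
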